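/- arXiv:2307.04566 — 3 statements merged into one kernel-verified Lean document; each statement's English description precedes it below -/
import Mathlib

section
/- Let d ∈ ℤ[X] be monic, quartic (degree 4) and squarefree, and suppose d is Pellian over ℤ[X], i.e. there exist f, g ∈ ℤ[X] with g ≠ 0 and f² − d·g² = 1. Let a₃ ∈ ℤ be the coefficient of X³ in d and let d_c(X) = d(X − a₃/4) ∈ ℚ[X]. If f₁, g₁ ∈ ℚ[X] satisfy f₁² − d_c·g₁² = 1 with g₁ ≠ 0 and f₁ has minimal degree among all such nontrivial solutions (for all f, g ∈ ℚ[X] with g ≠ 0 and f² − d_c·g² = 1, deg f₁ ≤ deg f), then the leading coefficient of f₁ is an integer. -/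
/-!
If `(F, G)` and `(f, g)` solve `F² - D G² = 1` in `R[X]`, with `D` monic of positive degree,
so does the quotient `(F + G√D)(f - g√D) = (F f - D G g) + (G f - F g)√D`. Take `(f, g)` of
minimal degree and flip the sign of `G` so that `lc G / lc F = lc g / lc f`. Either the quotient is trivial and `F = ±f`, or it has smaller degree and
`lc F = 2 · lc f · lc (F f - D G g)`; by descent `lc F = ±2ⁿ cⁿ⁺¹` with `c = lc f`.
The integral solution, moved by `X ↦ X - a₃/4`, keeps its integer leading coefficient,
so `2²ⁿ c²ⁿ⁺² ∈ ℤ`, and this forces `c ∈ ℤ`.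
-/

open Polynomial

theorem Polynomial.degree_one_lt_degree_mul_sq {R : Type*} [CommRing R] [IsDomain R]
    {D G : R[X]} (hD0 : 0 < D.natDegree) (hG : G ≠ 0) :
    degree (1 : R[X]) < degree (D * G ^ 2) := by
  have hD : D ≠ 0 := ne_zero_of_natDegree_gt hD0
  rw [degree_one, degree_eq_natDegree (mul_ne_zero hD (pow_ne_zero 2 hG)),
    natDegree_mul hD (pow_ne_zero 2 hG)]
  exact_mod_cast Nat.add_pos_left hD0 _

def IsPellSolution {A : Type*} [CommRing A] (D F G : A) : Prop :=
  F ^ 2 - D * G ^ 2 = 1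

namespace IsPellSolution

section CommRing

variable {A B : Type*} [CommRing A] [CommRing B] {D F G f g : A}

theorem neg_right (h : IsPellSolution D F G) : IsPellSolution D F (-G) := by
  unfold IsPellSolution at *
  linear_combination h

theorem mul_conj (h : IsPellSolution D F G) (h₁ : IsPellSolution D f g) :
    IsPellSolution D (F * f - D * G * g) (G * f - F * g) := by
  unfold IsPellSolution at *
  linear_combination (f ^ 2 - D * g ^ 2) * h + h₁

theorem map (φ : A →+* B) (h : IsPellSolution D F G) : IsPellSolution (φ D) (φ F) (φ G) := by
  unfold IsPellSolution at *
  simpa using congrArg φ h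

theorem sq_eq_sq_of_mul_eq_mul [IsDomain A] (h : IsPellSolution D F G)
    (h₁ : IsPellSolution D f g) (hg : g ≠ 0) (heq : G * f = F * g) : F ^ 2 = f ^ 2 := by
  unfold IsPellSolution at *
  have hGg : G ^ 2 = g ^ 2 := by
    linear_combination (-G ^ 2) * h₁ + g ^ 2 * h + (G * f + F * g) * heq
  refine mul_left_cancel₀ (pow_ne_zero 2 hg) ?_
  linear_combination (-1 : A) * (G * f + F * g) * heq + f ^ 2 * hGg

end CommRing

section Polynomial

variable {R : Type*} [CommRing R] [IsDomain R] {D F G f g : R[X]}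

theorem two_mul_natDegree (hD : D.Monic) (hD0 : 0 < D.natDegree) (h : IsPellSolution D F G)
    (hG : G ≠ 0) : 2 * F.natDegree = D.natDegree + 2 * G.natDegree := by
  have hF : F ^ 2 = D * G ^ 2 + 1 := by unfold IsPellSolution at h; linear_combination h
  have := congrArg natDegree hF
  rw [natDegree_add_eq_left_of_degree_lt (degree_one_lt_degree_mul_sq hD0 hG), natDegree_pow,
    natDegree_mul hD.ne_zero (pow_ne_zero 2 hG), natDegree_pow] at this
  omega

theorem leadingCoeff_sq (hD : D.Monic) (hD0 : 0 < D.natDegree) (h : IsPellSolution D F G)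
    (hG : G ≠ 0) : F.leadingCoeff ^ 2 = G.leadingCoeff ^ 2 := by
  have hF : F ^ 2 = D * G ^ 2 + 1 := by unfold IsPellSolution at h; linear_combination h
  have := congrArg leadingCoeff hF
  rwa [leadingCoeff_add_of_degree_lt' (degree_one_lt_degree_mul_sq hD0 hG), leadingCoeff_pow,
    leadingCoeff_mul, hD.leadingCoeff, one_mul, leadingCoeff_pow] at this

theorem ne_zero (hD : D.Monic) (hD0 : 0 < D.natDegree) (h : IsPellSolution D F G)
    (hG : G ≠ 0) : F ≠ 0 := by
  rintro rfl
  have := h.two_mul_natDegree hD hD0 hG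
  rw [natDegree_zero] at this
  omega

variable [NeZero (2 : R)]

theorem natDegree_mul_conj_add_le (hD : D.Monic) (hD0 : 0 < D.natDegree)
    (h : IsPellSolution D F G) (h₁ : IsPellSolution D f g) (hG : G ≠ 0) (hg : g ≠ 0)
    (hdeg : f.natDegree ≤ F.natDegree)
    (hsign : G.leadingCoeff * f.leadingCoeff = F.leadingCoeff * g.leadingCoeff)
    (hne : G * f - F * g ≠ 0) :
    (G * f - F * g).natDegree + f.natDegree ≤ G.natDegree := by
  have hF := h.two_mul_natDegree hD hD0 hG
  have hf := h₁.two_mul_natDegree hD hD0 hg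
  have hF0 := h.ne_zero hD hD0 hG
  have hf0 := h₁.ne_zero hD hD0 hg
  -- the leading terms of `G * f` and `F * g` add up instead of cancelling
  have hlc : (G * f).leadingCoeff + (F * g).leadingCoeff ≠ 0 := by
    rw [leadingCoeff_mul, leadingCoeff_mul, ← hsign, ← two_mul]
    exact mul_ne_zero two_ne_zero (mul_ne_zero (leadingCoeff_ne_zero.2 hG)
      (leadingCoeff_ne_zero.2 hf0))
  have hdeg_eq : (G * f).degree = (F * g).degree := by
    rw [degree_eq_natDegree (mul_ne_zero hG hf0), degree_eq_natDegree (mul_ne_zero hF0 hg),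
      natDegree_mul hG hf0, natDegree_mul hF0 hg]
    congr 1
    omega
  have hplus : (G * f + F * g).natDegree = G.natDegree + f.natDegree := by
    rw [← natDegree_mul hG hf0]
    exact natDegree_eq_of_degree_eq
      (by rw [degree_add_eq_of_leadingCoeff_add_ne_zero hlc, ← hdeg_eq, max_self])
  have hplus0 : G * f + F * g ≠ 0 := by
    intro h0
    rw [h0, natDegree_zero] at hplus
    omega
  have hprod : (G * f - F * g) * (G * f + F * g) = G ^ 2 - g ^ 2 := by
    unfold IsPellSolution at h h₁
    linear_combination G ^ 2 * h₁ - g ^ 2 * h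
  have hbound : (G ^ 2 - g ^ 2).natDegree ≤ 2 * G.natDegree := by
    refine (natDegree_sub_le _ _).trans (max_le ?_ ?_) <;> rw [natDegree_pow]
    omega
  rw [← hprod, natDegree_mul hne hplus0, hplus] at hbound
  omega

theorem natDegree_mul_conj_lt (hD : D.Monic) (hD0 : 0 < D.natDegree)
    (h : IsPellSolution D F G) (h₁ : IsPellSolution D f g) (hG : G ≠ 0) (hg : g ≠ 0)
    (hdeg : f.natDegree ≤ F.natDegree)
    (hsign : G.leadingCoeff * f.leadingCoeff = F.leadingCoeff * g.leadingCoeff)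
    (hne : G * f - F * g ≠ 0) :
    (F * f - D * G * g).natDegree < F.natDegree := by
  have := natDegree_mul_conj_add_le hD hD0 h h₁ hG hg hdeg hsign hne
  have := h.two_mul_natDegree hD hD0 hG
  have := h₁.two_mul_natDegree hD hD0 hg
  have := (h.mul_conj h₁).two_mul_natDegree hD hD0 hne
  omega

theorem leadingCoeff_eq_two_mul (hD : D.Monic) (hD0 : 0 < D.natDegree)
    (h : IsPellSolution D F G) (h₁ : IsPellSolution D f g) (hG : G ≠ 0) (hg : g ≠ 0)
    (hdeg : f.natDegree ≤ F.natDegree)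
    (hsign : G.leadingCoeff * f.leadingCoeff = F.leadingCoeff * g.leadingCoeff)
    (hne : G * f - F * g ≠ 0) :
    F.leadingCoeff = 2 * f.leadingCoeff * (F * f - D * G * g).leadingCoeff := by
  have hsmall := natDegree_mul_conj_add_le hD hD0 h h₁ hG hg hdeg hsign hne
  have h' := h.mul_conj h₁
  set F' := F * f - D * G * g
  set G' := G * f - F * g
  have hF := h.two_mul_natDegree hD hD0 hG
  have hf := h₁.two_mul_natDegree hD hD0 hg
  have hF' := h'.two_mul_natDegree hD hD0 hne
  have hF0 := h.ne_zero hD hD0 hG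
  have hf0 := h₁.ne_zero hD hD0 hg
  have hF'0 := h'.ne_zero hD hD0 hne
  have hrec : F = F' * f + D * (G' * g) := by
    unfold IsPellSolution at h₁
    linear_combination (-F) * h₁
  set N := F'.natDegree + f.natDegree
  have hN₁ : (F' * f).natDegree = N := natDegree_mul hF'0 hf0
  have hN₂ : (D * (G' * g)).natDegree = N := by
    rw [natDegree_mul hD.ne_zero (mul_ne_zero hne hg), natDegree_mul hne hg]
    omega
  have hFN : F.natDegree = N := by
    refine le_antisymm ?_ (by omega)
    rw [hrec]
    exact (natDegree_add_le _ _).trans (by omega)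
  have hcoeff : F.leadingCoeff = F'.leadingCoeff * f.leadingCoeff +
      G'.leadingCoeff * g.leadingCoeff := by
    rw [leadingCoeff, hFN]
    nth_rw 1 [hrec]
    rw [coeff_add, ← hN₁, coeff_natDegree, hN₁, ← hN₂, coeff_natDegree, leadingCoeff_mul,
      leadingCoeff_mul, leadingCoeff_mul, hD.leadingCoeff, one_mul]
  have hsq : (G'.leadingCoeff * g.leadingCoeff) ^ 2 = (F'.leadingCoeff * f.leadingCoeff) ^ 2 := by
    rw [mul_pow, mul_pow, h'.leadingCoeff_sq hD hD0 hne, h₁.leadingCoeff_sq hD hD0 hg]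
  rcases sq_eq_sq_iff_eq_or_eq_neg.1 hsq with hpos | hneg
  · rw [hcoeff, hpos]
    ring
  · refine absurd ?_ (leadingCoeff_ne_zero.2 hF0)
    rw [hcoeff, hneg]
    ring

theorem exists_leadingCoeff_sq_eq_of_minimal (hD : D.Monic) (hD0 : 0 < D.natDegree)
    (h₁ : IsPellSolution D f g) (hg : g ≠ 0)
    (hmin : ∀ F G, G ≠ 0 → IsPellSolution D F G → f.natDegree ≤ F.natDegree)
    (h : IsPellSolution D F G) (hG : G ≠ 0) :
    ∃ n : ℕ, F.leadingCoeff ^ 2 = (2 ^ n * f.leadingCoeff ^ (n + 1)) ^ 2 := by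
  induction hN : F.natDegree using Nat.strong_induction_on generalizing F G with
  | _ N ih =>
    obtain ⟨G, h, hG, hsign⟩ : ∃ G', IsPellSolution D F G' ∧ G' ≠ 0 ∧
        G'.leadingCoeff * f.leadingCoeff = F.leadingCoeff * g.leadingCoeff := by
      have hsq : (G.leadingCoeff * f.leadingCoeff) ^ 2 =
          (F.leadingCoeff * g.leadingCoeff) ^ 2 := by
        rw [mul_pow, mul_pow, h.leadingCoeff_sq hD hD0 hG, h₁.leadingCoeff_sq hD hD0 hg,
          mul_comm]
      rcases sq_eq_sq_iff_eq_or_eq_neg.1 hsq with hpos | hneg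
      · exact ⟨G, h, hG, hpos⟩
      · refine ⟨-G, h.neg_right, neg_ne_zero.2 hG, ?_⟩
        rw [leadingCoeff_neg, neg_mul, hneg, neg_neg]
    by_cases hne : G * f - F * g = 0
    · refine ⟨0, ?_⟩
      rw [← leadingCoeff_pow, h.sq_eq_sq_of_mul_eq_mul h₁ hg (sub_eq_zero.1 hne),
        leadingCoeff_pow]
      ring
    have hdeg := hmin F G hG h
    have hlt := natDegree_mul_conj_lt hD hD0 h h₁ hG hg hdeg hsign hne
    obtain ⟨n, hn⟩ := ih _ (hN ▸ hlt) (mul_conj h h₁) hne rfl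
    refine ⟨n + 1, ?_⟩
    rw [leadingCoeff_eq_two_mul hD hD0 h h₁ hG hg hdeg hsign hne, mul_pow, hn]
    ring

end Polynomial

end IsPellSolution

theorem Rat.den_eq_one_of_two_pow_mul_pow_eq_intCast {c : ℚ} {m k : ℕ} {z : ℤ} (hmk : m < k)
    (h : 2 ^ m * c ^ k = z) : c.den = 1 := by
  have hZ : z * (c.den : ℤ) ^ k = 2 ^ m * c.num ^ k := by
    have hq : (z : ℚ) * (c.den : ℚ) ^ k = 2 ^ m * c.num ^ k := by
      rw [← h, ← Rat.mul_den_eq_num]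
      ring
    exact_mod_cast hq
  have hdvd : (c.den : ℤ) ^ k ∣ 2 ^ m :=
    (c.isCoprime_num_den.symm.pow).dvd_of_dvd_mul_right ⟨z, by rw [← hZ, mul_comm]⟩
  have hle : c.den ^ k ≤ 2 ^ m := Nat.le_of_dvd (by positivity) (by exact_mod_cast hdvd)
  have hlt : c.den < 2 := by
    by_contra! h2
    exact (Nat.pow_lt_pow_right one_lt_two hmk).not_ge ((Nat.pow_le_pow_left h2 k).trans hle)
  have := c.den_pos
  omega

theorem Polynomial.leadingCoeff_map_comp_X_sub_C {R K : Type*} [CommRing R] [CommRing K]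
    [IsDomain K] {φ : R →+* K} (hφ : Function.Injective φ) (p : R[X]) (r : K) :
    ((p.map φ).comp (X - C r)).leadingCoeff = φ p.leadingCoeff := by
  rw [leadingCoeff_comp (by rw [natDegree_X_sub_C]; exact one_ne_zero), leadingCoeff_X_sub_C,
    one_pow, mul_one, leadingCoeff_map_of_injective hφ]

theorem minimal_solution_integral_leading_coeff_general
    (d : Polynomial ℤ) (hmonic : d.Monic) (hdeg : d.natDegree = 4)
    (hpellian : ∃ f g : Polynomial ℤ, g ≠ 0 ∧ f ^ 2 - d * g ^ 2 = 1)
    (d_c : Polynomial ℚ)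
    (hd_c : d_c = (d.map (Int.castRingHom ℚ)).comp (X - C ((d.coeff 3 : ℚ) / 4)))
    (f₁ g₁ : Polynomial ℚ) (hg₁ : g₁ ≠ 0) (hpell : f₁ ^ 2 - d_c * g₁ ^ 2 = 1)
    (hmin : ∀ f g : Polynomial ℚ, g ≠ 0 → f ^ 2 - d_c * g ^ 2 = 1 →
      f₁.degree ≤ f.degree) :
    f₁.leadingCoeff.den = 1 := by
  obtain ⟨f, g, hg, hfg⟩ := hpellian
  let φ : ℤ[X] →+* ℚ[X] :=
    (compRingHom (X - C ((d.coeff 3 : ℚ) / 4))).comp (mapRingHom (Int.castRingHom ℚ))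
  have hφ (p : ℤ[X]) : (φ p).leadingCoeff = p.leadingCoeff :=
    leadingCoeff_map_comp_X_sub_C Int.cast_injective p _
  have hD : d_c.Monic := hd_c ▸ (hmonic.map _).comp_X_sub_C _
  have hD0 : 0 < d_c.natDegree := by
    rw [hd_c, natDegree_comp, natDegree_X_sub_C, natDegree_map_eq_of_injective Int.cast_injective,
      hdeg]
    norm_num
  have hsol : IsPellSolution d_c (φ f) (φ g) := hd_c ▸ IsPellSolution.map φ hfg
  have hφg : φ g ≠ 0 := by
    rw [← leadingCoeff_ne_zero, hφ]
    exact_mod_cast leadingCoeff_ne_zero.2 hg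
  obtain ⟨n, hn⟩ := IsPellSolution.exists_leadingCoeff_sq_eq_of_minimal hD hD0 hpell hg₁
    (fun F G hG h ↦ natDegree_le_natDegree (hmin F G hG h)) hsol hφg
  refine Rat.den_eq_one_of_two_pow_mul_pow_eq_intCast (m := 2 * n) (k := 2 * n + 2)
    (z := f.leadingCoeff ^ 2) (by omega) ?_
  rw [hφ] at hn
  push_cast [hn]
  ring

theorem minimal_solution_integral_leading_coeff
    (d : Polynomial ℤ) (hmonic : d.Monic) (hdeg : d.natDegree = 4) (hsf : Squarefree d)
    (hpellian : ∃ f g : Polynomial ℤ, g ≠ 0 ∧ f ^ 2 - d * g ^ 2 = 1)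
    (d_c : Polynomial ℚ)
    (hd_c : d_c = (d.map (Int.castRingHom ℚ)).comp (X - C ((d.coeff 3 : ℚ) / 4)))
    (f₁ g₁ : Polynomial ℚ) (hg₁ : g₁ ≠ 0) (hpell : f₁ ^ 2 - d_c * g₁ ^ 2 = 1)
    (hmin : ∀ f g : Polynomial ℚ, g ≠ 0 → f ^ 2 - d_c * g ^ 2 = 1 →
      f₁.degree ≤ f.degree) :
    f₁.leadingCoeff.den = 1 :=
  minimal_solution_integral_leading_coeff_general d hmonic hdeg hpellian d_c hd_c f₁ g₁ hg₁ hpell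
    hmin
end

section
/- Let a, b ∈ ℚ with a ≠ 0 and b ≠ 0, and let d(X) = X⁴ + ((−2a² + 12a − 2)/b²)·X² + (32a/b³)·X + ((a⁴ − 12a³ + 6a² + 20a + 1)/b⁴) ∈ ℚ[X]. If d is squarefree, then d is Pellian over ℚ[X]: there exist f, g ∈ ℚ[X] with g ≠ 0 and f² − d·g² = 1. -/
/-!
After the substitution `X ↦ X / b` and clearing the factor `b⁻⁴`, `d` becomes the quartic
`D_a = X⁴ + (-2a² + 12a - 2)X² + 32aX + (a⁴ - 12a³ + 6a² + 20a + 1)`, and Pellianity is invariant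
under both operations. For `D_a` one writes down a quintic `F` and a cubic `G` with
`F² - D_a G² = (64a²)²`, so `(F, G) / 64a²` solves the Pell equation.
-/

open Polynomial

def IsPellian {R : Type*} [CommRing R] (d : R[X]) : Prop :=
  ∃ f g : R[X], g ≠ 0 ∧ f ^ 2 - d * g ^ 2 = 1

namespace IsPellian

variable {K : Type*} [Field K]

theorem of_sq_sub_mul_sq_eq_C_sq {d f g : K[X]} {u : K} (hu : u ≠ 0) (hg : g ≠ 0)
    (h : f ^ 2 - d * g ^ 2 = C (u ^ 2)) : IsPellian d := by
  refine ⟨C u⁻¹ * f, C u⁻¹ * g, mul_ne_zero (C_ne_zero.mpr (inv_ne_zero hu)) hg, ?_⟩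
  calc (C u⁻¹ * f) ^ 2 - d * (C u⁻¹ * g) ^ 2 = C (u⁻¹ ^ 2) * (f ^ 2 - d * g ^ 2) := by
        rw [C_pow]; ring
    _ = 1 := by rw [h, ← C_mul, inv_pow, inv_mul_cancel₀ (pow_ne_zero 2 hu), C_1]

theorem C_sq_mul {d : K[X]} (hd : IsPellian d) {v : K} (hv : v ≠ 0) :
    IsPellian (C (v ^ 2) * d) := by
  obtain ⟨f, g, hg, h⟩ := hd
  refine ⟨f, C v⁻¹ * g, mul_ne_zero (C_ne_zero.mpr (inv_ne_zero hv)) hg, ?_⟩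
  calc f ^ 2 - C (v ^ 2) * d * (C v⁻¹ * g) ^ 2 = f ^ 2 - C ((v * v⁻¹) ^ 2) * d * g ^ 2 := by
        simp only [C_pow, C_mul]; ring
    _ = 1 := by rw [mul_inv_cancel₀ hv, one_pow, C_1, one_mul, h]

theorem comp {R : Type*} [CommRing R] [IsDomain R] {d q : R[X]} (hd : IsPellian d)
    (hq : 0 < q.natDegree) : IsPellian (d.comp q) := by
  obtain ⟨f, g, hg, h⟩ := hd
  refine ⟨f.comp q, g.comp q, ?_, ?_⟩
  · rw [Ne, comp_eq_zero_iff]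
    rintro (rfl | ⟨-, hq'⟩)
    · exact hg rfl
    · rw [hq', natDegree_C] at hq; exact hq.false
  · simpa only [sub_comp, mul_comp, pow_comp, one_comp] using congrArg (·.comp q) h

end IsPellian

noncomputable section

namespace TorsionFive

variable {R : Type*} [CommRing R]

def quartic (a : R) : R[X] :=
  X ^ 4 + C (-2 * a ^ 2 + 12 * a - 2) * X ^ 2 + C (32 * a) * X
    + C (a ^ 4 - 12 * a ^ 3 + 6 * a ^ 2 + 20 * a + 1)

/-- `F + G √D_a` is, up to the factor `64a²`, the fundamental unit; `deg F = 5` is the order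
of `∞₊ - ∞₋`, since `div (F - G y) = ±5 (∞₊ - ∞₋)` on `y² = D_a`. -/
def pellF (a : R) : R[X] :=
  X ^ 5 + C (a - 3) * X ^ 4 + C (-2 * a ^ 2 + 12 * a + 2) * X ^ 3
    + C (-2 * a ^ 3 + 18 * a ^ 2 - 10 * a + 2) * X ^ 2
    + C (a ^ 4 - 12 * a ^ 3 + 34 * a ^ 2 - 20 * a - 3) * X
    + C (a ^ 5 - 15 * a ^ 4 + 46 * a ^ 3 + 14 * a ^ 2 + 17 * a + 1)

def pellG (a : R) : R[X] :=
  X ^ 3 + C (a - 3) * X ^ 2 + C (-a ^ 2 + 6 * a + 3) * X + C (-a ^ 3 + 9 * a ^ 2 - 7 * a - 1)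

theorem pellF_sq_sub_quartic_mul_pellG_sq (a : R) :
    pellF a ^ 2 - quartic a * pellG a ^ 2 = C ((64 * a ^ 2) ^ 2) := by
  simp only [pellF, pellG, quartic, map_add, map_sub, map_mul, map_pow, map_neg, map_one, map_ofNat]
  ring

theorem pellG_ne_zero [Nontrivial R] (a : R) : pellG a ≠ 0 := by
  have : (pellG a).natDegree = 3 := by unfold pellG; compute_degree!
  intro h; simp [h] at this

theorem isPellian_quartic {K : Type*} [Field K] [CharZero K] {a : K} (ha : a ≠ 0) :
    IsPellian (quartic a) :=
  .of_sq_sub_mul_sq_eq_C_sq (mul_ne_zero (by norm_num) (pow_ne_zero 2 ha)) (pellG_ne_zero a)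
    (pellF_sq_sub_quartic_mul_pellG_sq a)

theorem C_mul_quartic_comp {K : Type*} [Field K] (a : K) {b : K} (hb : b ≠ 0) :
    C ((b⁻¹ ^ 2) ^ 2) * (quartic a).comp (C b * X) =
      X ^ 4 + C ((-2 * a ^ 2 + 12 * a - 2) / b ^ 2) * X ^ 2 + C (32 * a / b ^ 3) * X
        + C ((a ^ 4 - 12 * a ^ 3 + 6 * a ^ 2 + 20 * a + 1) / b ^ 4) := by
  simp only [quartic, add_comp, mul_comp, pow_comp, C_comp, X_comp, mul_pow, ← C_pow, mul_add,
    ← mul_assoc, ← C_mul]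
  congr 3
  · rw [← pow_mul, ← mul_pow, inv_mul_cancel₀ hb, one_pow, C_1, one_mul]
  all_goals field_simp

end TorsionFive

end

theorem torsion_order_five_family_pellian_general (a b : ℚ) (ha : a ≠ 0) (hb : b ≠ 0)
    (d : Polynomial ℚ)
    (hd : d = X ^ 4 + C ((-2 * a ^ 2 + 12 * a - 2) / b ^ 2) * X ^ 2
        + C (32 * a / b ^ 3) * X
        + C ((a ^ 4 - 12 * a ^ 3 + 6 * a ^ 2 + 20 * a + 1) / b ^ 4)) :
    ∃ f g : Polynomial ℚ, g ≠ 0 ∧ f ^ 2 - d * g ^ 2 = 1 := by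
  have hdeg : 0 < (C b * X).natDegree := by rw [natDegree_C_mul_X b hb]; exact one_pos
  rw [hd, ← TorsionFive.C_mul_quartic_comp a hb]
  exact ((TorsionFive.isPellian_quartic ha).comp hdeg).C_sq_mul (pow_ne_zero 2 (inv_ne_zero hb))

theorem torsion_order_five_family_pellian (a b : ℚ) (ha : a ≠ 0) (hb : b ≠ 0)
    (d : Polynomial ℚ)
    (hd : d = X ^ 4 + C ((-2 * a ^ 2 + 12 * a - 2) / b ^ 2) * X ^ 2
        + C (32 * a / b ^ 3) * X
        + C ((a ^ 4 - 12 * a ^ 3 + 6 * a ^ 2 + 20 * a + 1) / b ^ 4))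
    (hsf : Squarefree d) :
    ∃ f g : Polynomial ℚ, g ≠ 0 ∧ f ^ 2 - d * g ^ 2 = 1 :=
  torsion_order_five_family_pellian_general a b ha hb d hd
end

section
/- Let a, b ∈ ℚ with a ≠ 0 and b ≠ 0, and let d(X) = X⁴ + ((6a² + 12a − 2)/b²)·X² + ((32a² + 32a)/b³)·X + ((9a⁴ + 4a³ + 30a² + 20a + 1)/b⁴) ∈ ℚ[X]. If d is squarefree, then d is Pellian over ℚ[X]: there exist f, g ∈ ℚ[X] with g ≠ 0 and f² − d·g² = 1. -/
/-!
Substituting `X ↦ b X` and rescaling by the square `b⁴` reduces the family to `b = 1`.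
There the quartic admits an explicit solution `(F, G)` of `F² - d G² = c` with constant
`c = -2¹⁴ a⁵ (a + 1)⁴`, and `(F + G√d)² / c` is a unit of norm `1`. Squarefreeness rules
out `a = -1`, where `d` is a square and `c` vanishes.
-/

open Polynomial

namespace Polynomial

def IsPellian {R : Type*} [CommRing R] (d : R[X]) : Prop :=
  ∃ f g : R[X], g ≠ 0 ∧ f ^ 2 - d * g ^ 2 = 1

theorem IsPellian.comp {R : Type*} [CommRing R] [IsDomain R] {d p : R[X]} (hd : IsPellian d)
    (hp : p.natDegree ≠ 0) : IsPellian (d.comp p) := by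
  obtain ⟨f, g, hg, hfg⟩ := hd
  refine ⟨f.comp p, g.comp p, ?_, ?_⟩
  · intro h
    rcases comp_eq_zero_iff.mp h with hg0 | ⟨-, hpC⟩
    · exact hg hg0
    · exact hp (by rw [hpC, natDegree_C])
  · simpa only [sub_comp, mul_comp, pow_comp, one_comp] using congrArg (·.comp p) hfg

theorem not_squarefree_C_mul_sq {R : Type*} [CommRing R] [IsDomain R] (u : R) {q : R[X]}
    (hq : q.natDegree ≠ 0) : ¬ Squarefree (C u * q ^ 2) :=
  fun h => hq (natDegree_eq_zero_of_isUnit (h q ⟨C u, by ring⟩))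

variable {K : Type*} [Field K]

/-- `(F + G√d)² / c = (2F²/c - 1) + (2FG/c)√d` has norm `1`. -/
theorem isPellian_of_sq_sub_mul_sq_eq_C {d F G : K[X]} {c : K} (h2 : (2 : K) ≠ 0) (hc : c ≠ 0)
    (hF : F ≠ 0) (hG : G ≠ 0) (h : F ^ 2 - d * G ^ 2 = C c) : IsPellian d := by
  have hcc : C (2 / c) * C c = (2 : K[X]) := by
    rw [← C_mul, div_mul_cancel₀ _ hc, C_ofNat]
  refine ⟨C (2 / c) * F ^ 2 - 1, C (2 / c) * (F * G), ?_, ?_⟩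
  · exact mul_ne_zero (C_ne_zero.mpr (div_ne_zero h2 hc)) (mul_ne_zero hF hG)
  · linear_combination (C (2 / c) ^ 2 * F ^ 2) * h + (C (2 / c) * F ^ 2) * hcc

theorem IsPellian.C_sq_mul {d : K[X]} (hd : IsPellian d) {u : K} (hu : u ≠ 0) :
    IsPellian (C (u ^ 2) * d) := by
  obtain ⟨f, g, hg, hfg⟩ := hd
  refine ⟨f, C u⁻¹ * g, mul_ne_zero (C_ne_zero.mpr (inv_ne_zero hu)) hg, ?_⟩
  have hu' : C u * C u⁻¹ = (1 : K[X]) := by rw [← C_mul, mul_inv_cancel₀ hu, C_1]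
  rw [C_pow]
  linear_combination hfg - d * g ^ 2 * (C u * C u⁻¹ + 1) * hu'

end Polynomial

section TorsionSix

variable {K : Type*}

/-- The member `b = 1` of the family; the member with parameter `b` is `b⁻⁴ d(b X)`. -/
noncomputable def torsionSixQuartic [CommRing K] (a : K) : K[X] :=
  X ^ 4 + C (6 * a ^ 2 + 12 * a - 2) * X ^ 2 + C (32 * a ^ 2 + 32 * a) * X
    + C (9 * a ^ 4 + 4 * a ^ 3 + 30 * a ^ 2 + 20 * a + 1)

theorem torsionSixQuartic_neg_one [CommRing K] :
    torsionSixQuartic (-1 : K) = (X ^ 2 - C 4) ^ 2 := by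
  simp only [torsionSixQuartic, map_sub, map_add, map_mul, map_pow, map_neg, map_one, map_ofNat]
  ring

/-- The fundamental solution of the norm equation: its degree `6` is the torsion order of
`∞₊ - ∞₋`. -/
theorem torsionSixQuartic_norm_eq [CommRing K] (a : K) :
    (X ^ 6 - 4 * X ^ 5 + C (5 + 18 * a + 9 * a ^ 2) * X ^ 4 - C (32 * a) * X ^ 3
        + C (-5 - 12 * a + 34 * a ^ 2 + 84 * a ^ 3 + 27 * a ^ 4) * X ^ 2
        + C (4 + 48 * a + 56 * a ^ 2 + 112 * a ^ 3 + 36 * a ^ 4) * X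
        + C (-1 - 22 * a - 99 * a ^ 2 - 100 * a ^ 3 + 105 * a ^ 4 + 90 * a ^ 5 + 27 * a ^ 6)) ^ 2
      - torsionSixQuartic a * (X ^ 4 - 4 * X ^ 3 + C (6 + 12 * a + 6 * a ^ 2) * X ^ 2
        + C (-4 - 24 * a - 4 * a ^ 2) * X
        + C (1 + 12 * a + 14 * a ^ 2 + 28 * a ^ 3 + 9 * a ^ 4)) ^ 2
      = C (-2 ^ 14 * a ^ 5 * (a + 1) ^ 4) := by
  simp only [torsionSixQuartic, map_sub, map_add, map_mul, map_pow, map_neg, map_one, map_ofNat]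
  ring

theorem isPellian_torsionSixQuartic [Field K] {a : K} (h2 : (2 : K) ≠ 0) (ha : a ≠ 0)
    (ha1 : a + 1 ≠ 0) : (torsionSixQuartic a).IsPellian := by
  refine isPellian_of_sq_sub_mul_sq_eq_C h2 ?_ ?_ ?_ (torsionSixQuartic_norm_eq a)
  · exact mul_ne_zero (mul_ne_zero (neg_ne_zero.mpr (pow_ne_zero _ h2)) (pow_ne_zero _ ha))
      (pow_ne_zero _ ha1)
  · apply Monic.ne_zero
    monicity!
  · apply Monic.ne_zero
    monicity!

theorem eq_torsionSixQuartic_comp [Field K] (a : K) {b : K} (hb : b ≠ 0) :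
    X ^ 4 + C ((6 * a ^ 2 + 12 * a - 2) / b ^ 2) * X ^ 2
        + C ((32 * a ^ 2 + 32 * a) / b ^ 3) * X
        + C ((9 * a ^ 4 + 4 * a ^ 3 + 30 * a ^ 2 + 20 * a + 1) / b ^ 4)
      = C ((b⁻¹ ^ 2) ^ 2) * (torsionSixQuartic a).comp (C b * X) := by
  have hbb : C b * C b⁻¹ = (1 : K[X]) := by rw [← C_mul, mul_inv_cancel₀ hb, C_1]
  simp only [torsionSixQuartic, add_comp, mul_comp, pow_comp, X_comp, C_comp]
  simp only [div_eq_mul_inv, ← inv_pow, map_mul, map_pow, map_add, map_sub, map_ofNat]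
  linear_combination (-(X ^ 4 * (1 + C b * C b⁻¹) * (1 + C b ^ 2 * C b⁻¹ ^ 2))
    - (6 * C a ^ 2 + 12 * C a - 2) * C b⁻¹ ^ 2 * X ^ 2 * (1 + C b * C b⁻¹)
    - (32 * C a ^ 2 + 32 * C a) * C b⁻¹ ^ 3 * X) * hbb

end TorsionSix

theorem torsion_order_six_family_pellian (a b : ℚ) (ha : a ≠ 0) (hb : b ≠ 0)
    (d : Polynomial ℚ)
    (hd : d = X ^ 4 + C ((6 * a ^ 2 + 12 * a - 2) / b ^ 2) * X ^ 2
        + C ((32 * a ^ 2 + 32 * a) / b ^ 3) * X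
        + C ((9 * a ^ 4 + 4 * a ^ 3 + 30 * a ^ 2 + 20 * a + 1) / b ^ 4))
    (hsf : Squarefree d) :
    ∃ f g : Polynomial ℚ, g ≠ 0 ∧ f ^ 2 - d * g ^ 2 = 1 := by
  rw [eq_torsionSixQuartic_comp a hb] at hd
  subst hd
  have hbX : (C b * X).natDegree = 1 := natDegree_C_mul_X b hb
  have ha1 : a + 1 ≠ 0 := by
    intro h
    rw [eq_neg_of_add_eq_zero_left h, torsionSixQuartic_neg_one, pow_comp] at hsf
    refine not_squarefree_C_mul_sq _ ?_ hsf
    rw [natDegree_comp, natDegree_X_pow_sub_C, hbX]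
    exact two_ne_zero
  exact ((isPellian_torsionSixQuartic two_ne_zero ha ha1).comp (hbX ▸ one_ne_zero)).C_sq_mul
    (pow_ne_zero 2 (inv_ne_zero hb))
end
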